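/- Let p be an odd prime, G = GL₂(𝔽_p), N the normalizer of the diagonal torus, σ_{−1} = [[1,1],[1,−1]], and N'' the normalizer of the Cartan C'' = {[[x,y],[y,x]]}. Then in ℤ[N\G/N], the square Nσ_{−1}N × Nσ_{−1}N equals NN'' × N''N. -/

import Mathlib

open Matrix Pointwise
open scoped Classical

noncomputable section

abbrev GL2 (p : ℕ) := GL (Fin 2) (ZMod p)

namespace Chen

variable (p : ℕ)

/-- The Borel subgroup of upper triangular matrices in `GL₂(𝔽_p)`. -/
def Bor : Subgroup (GL2 p) where
  carrier := {g | (g : Matrix (Fin 2) (Fin 2) (ZMod p)) 1 0 = 0}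
  one_mem' := by
    show ((1 : GL2 p) : Matrix (Fin 2) (Fin 2) (ZMod p)) 1 0 = 0
    simp [Matrix.one_apply]
  mul_mem' := by
    intro a b ha hb
    show ((a * b : GL2 p) : Matrix (Fin 2) (Fin 2) (ZMod p)) 1 0 = 0
    simp only [Set.mem_setOf_eq] at ha hb
    rw [Units.val_mul, Matrix.mul_apply, Fin.sum_univ_two, ha, hb]
    ring
  inv_mem' := by
    intro a ha
    show ((a⁻¹ : GL2 p) : Matrix (Fin 2) (Fin 2) (ZMod p)) 1 0 = 0
    simp only [Set.mem_setOf_eq] at ha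
    rw [Matrix.coe_units_inv, Matrix.inv_def]
    simp [Matrix.adjugate_fin_two, ha]

/-- The split (diagonal) Cartan subgroup of `GL₂(𝔽_p)`. -/
def Cs : Subgroup (GL2 p) where
  carrier := {g | (g : Matrix (Fin 2) (Fin 2) (ZMod p)) 0 1 = 0 ∧
      (g : Matrix (Fin 2) (Fin 2) (ZMod p)) 1 0 = 0}
  one_mem' := by
    constructor <;>
    · show ((1 : GL2 p) : Matrix (Fin 2) (Fin 2) (ZMod p)) _ _ = 0
      simp [Matrix.one_apply]
  mul_mem' := by
    intro a b ha hb
    simp only [Set.mem_setOf_eq] at ha hb ⊢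
    constructor <;>
    · show ((a * b : GL2 p) : Matrix (Fin 2) (Fin 2) (ZMod p)) _ _ = 0
      rw [Units.val_mul, Matrix.mul_apply, Fin.sum_univ_two]
      simp [ha.1, ha.2, hb.1, hb.2]
  inv_mem' := by
    intro a ha
    simp only [Set.mem_setOf_eq] at ha ⊢
    constructor <;>
    · show ((a⁻¹ : GL2 p) : Matrix (Fin 2) (Fin 2) (ZMod p)) _ _ = 0
      rw [Matrix.coe_units_inv, Matrix.inv_def]
      simp [Matrix.adjugate_fin_two, ha.1, ha.2]

/-- A (generalized) Cartan subgroup `{[[x, u*y],[y, x]]}` of `GL₂(𝔽_p)`;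
for `u = λ` a non-square this is the nonsplit Cartan `C'`, for `u = 1` the split Cartan `C''`. -/
def Cgen (u : ZMod p) : Subgroup (GL2 p) where
  carrier := {g | (g : Matrix (Fin 2) (Fin 2) (ZMod p)) 0 0 =
      (g : Matrix (Fin 2) (Fin 2) (ZMod p)) 1 1 ∧
      (g : Matrix (Fin 2) (Fin 2) (ZMod p)) 0 1 =
      u * (g : Matrix (Fin 2) (Fin 2) (ZMod p)) 1 0}
  one_mem' := by
    constructor <;> simp [Matrix.one_apply]
  mul_mem' := by
    intro a b ha hb
    simp only [Set.mem_setOf_eq] at ha hb ⊢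
    obtain ⟨ha1, ha2⟩ := ha
    obtain ⟨hb1, hb2⟩ := hb
    constructor <;>
    · show ((a * b : GL2 p) : Matrix (Fin 2) (Fin 2) (ZMod p)) _ _ =
        _
      simp only [Units.val_mul, Matrix.mul_apply, Fin.sum_univ_two]
      rw [ha1, ha2, hb1, hb2]
      ring
  inv_mem' := by
    intro a ha
    simp only [Set.mem_setOf_eq] at ha ⊢
    obtain ⟨ha1, ha2⟩ := ha
    constructor <;>
    · show ((a⁻¹ : GL2 p) : Matrix (Fin 2) (Fin 2) (ZMod p)) _ _ = _
      rw [Matrix.coe_units_inv, Matrix.inv_def]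
      simp [Matrix.adjugate_fin_two, ha1, ha2]
      try ring

/-- `N`, the normalizer of the split (diagonal) Cartan subgroup. -/
def Nspl : Subgroup (GL2 p) := Subgroup.normalizer (Cs p : Set (GL2 p))

/-- `N'`, the normalizer of the nonsplit Cartan subgroup (for `λ` a non-square). -/
def Nns (lam : ZMod p) : Subgroup (GL2 p) := Subgroup.normalizer (Cgen p lam : Set (GL2 p))

/-- `N''`, the normalizer of the split Cartan `C'' = {[[x,y],[y,x]]}`. -/
def Nspl' : Subgroup (GL2 p) := Subgroup.normalizer (Cgen p 1 : Set (GL2 p))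

/-- The double coset `N σ_t N` where `σ_t = [[1,1],[1,t]]`. -/
def dosetN (t : ZMod p) : Set (GL2 p) :=
  {g | ∃ a ∈ Nspl p, ∃ b ∈ Nspl p,
    ((a⁻¹ * g * b⁻¹ : GL2 p) : Matrix (Fin 2) (Fin 2) (ZMod p)) = !![1, 1; 1, t]}

/-- The double coset operator `ℝ[G/H] → ℝ[G/K]` (coefficients in `R`) attached to a
left-`H`-invariant, right-`K`-invariant set `S ⊆ G`: the basis vector `xH` is sent to the
sum of the `K`-cosets contained in `x·S`. -/
def T (R : Type) [CommRing R] {G : Type} [Group G] [Fintype G] (H K : Subgroup G)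
    (S : Set G) : ((G ⧸ H) → R) →ₗ[R] ((G ⧸ K) → R) where
  toFun v c := ∑ d : G ⧸ H,
    v d * (if c ∈ QuotientGroup.mk '' ((Quotient.out d) • S) then 1 else 0)
  map_add' := by
    intro u v
    funext c
    simp only [Pi.add_apply]
    rw [← Finset.sum_add_distrib]
    refine Finset.sum_congr rfl fun d _ => ?_
    ring
  map_smul' := by
    intro a v
    funext c
    simp only [Pi.smul_apply, smul_eq_mul, RingHom.id_apply]
    rw [Finset.mul_sum]
    refine Finset.sum_congr rfl fun d _ => ?_
    ring

end Chen


section Aux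
open Chen

variable {p : ℕ} [Fact p.Prime]

lemma two_nz (hodd : Odd p) : (2 : ZMod p) ≠ 0 := by
  have hp2 : p ≠ 2 := by rintro rfl; simp [Nat.odd_iff] at hodd
  have : ((2:ℕ) : ZMod p) ≠ 0 := by
    rw [Ne, ZMod.natCast_eq_zero_iff]
    intro h
    exact hp2 ((Nat.prime_dvd_prime_iff_eq (Fact.out) Nat.prime_two).mp h)
  simpa using this

/-- σ₋₁ as an element of GL₂. -/
def sg (p : ℕ) [Fact p.Prime] (h2 : (2 : ZMod p) ≠ 0) : GL2 p :=
  ⟨!![1,1;1,-1], (2 : ZMod p)⁻¹ • !![1,1;1,-1], by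
    ext i j
    fin_cases i <;> fin_cases j <;>
      simp [Matrix.mul_apply, Fin.sum_univ_two, Matrix.one_apply] <;>
      field_simp <;> ring, by
    ext i j
    fin_cases i <;> fin_cases j <;>
      simp [Matrix.mul_apply, Fin.sum_univ_two, Matrix.one_apply] <;>
      field_simp <;> ring⟩

variable (h2 : (2 : ZMod p) ≠ 0)

lemma sg_val : ((sg p h2 : GL2 p) : Matrix (Fin 2) (Fin 2) (ZMod p)) = !![1,1;1,-1] := rfl

lemma sg_inv_val :
    (((sg p h2)⁻¹ : GL2 p) : Matrix (Fin 2) (Fin 2) (ZMod p))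
      = (2 : ZMod p)⁻¹ • !![1,1;1,-1] := rfl

lemma sg_val_inv :
    ((sg p h2 : GL2 p) : Matrix (Fin 2) (Fin 2) (ZMod p))⁻¹
      = (2 : ZMod p)⁻¹ • !![1,1;1,-1] := by
  rw [← Matrix.coe_units_inv]; rfl

lemma sg_sq_mem : sg p h2 * sg p h2 ∈ Cs p := by
  constructor <;>
  · show ((sg p h2 * sg p h2 : GL2 p) : Matrix (Fin 2) (Fin 2) (ZMod p)) _ _ = 0
    simp [Units.val_mul, sg_val, Matrix.mul_apply, Fin.sum_univ_two]

lemma sg_sq_mem_N : sg p h2 * sg p h2 ∈ Nspl p :=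
  Subgroup.le_normalizer (sg_sq_mem h2)

end Aux


section Aux2
open Chen

variable {p : ℕ} [Fact p.Prime] (h2 : (2 : ZMod p) ≠ 0)

lemma Cgen_one_eq : Cgen p 1 = (Cs p).map (MulAut.conj (sg p h2)).toMonoidHom := by
  ext g
  rw [Subgroup.mem_map]
  constructor
  · rintro ⟨hgd, hgo⟩
    refine ⟨(sg p h2)⁻¹ * (g * sg p h2), ⟨?_, ?_⟩, ?_⟩
    · show (((sg p h2)⁻¹ * (g * sg p h2) : GL2 p) : Matrix (Fin 2) (Fin 2) (ZMod p)) 0 1 = 0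
      simp only [Units.val_mul, sg_val, sg_inv_val, Matrix.smul_mul, Matrix.smul_apply,
        Matrix.mul_apply, Fin.sum_univ_two]
      rw [hgd, hgo]
      simp [Matrix.cons_val_zero, Matrix.cons_val_one]
      ring
    · show (((sg p h2)⁻¹ * (g * sg p h2) : GL2 p) : Matrix (Fin 2) (Fin 2) (ZMod p)) 1 0 = 0
      simp only [Units.val_mul, sg_val, sg_inv_val, Matrix.smul_mul, Matrix.smul_apply,
        Matrix.mul_apply, Fin.sum_univ_two]
      rw [hgd, hgo]
      simp [Matrix.cons_val_zero, Matrix.cons_val_one]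
      ring
    · show sg p h2 * ((sg p h2)⁻¹ * (g * sg p h2)) * (sg p h2)⁻¹ = g
      group
  · rintro ⟨h, ⟨hh1, hh2⟩, rfl⟩
    show sg p h2 * h * (sg p h2)⁻¹ ∈ Cgen p 1
    have key : ((sg p h2 * h * (sg p h2)⁻¹ : GL2 p) : Matrix (Fin 2) (Fin 2) (ZMod p))
        = (2:ZMod p)⁻¹ • !![(h : Matrix (Fin 2) (Fin 2) (ZMod p)) 0 0
              + (h : Matrix (Fin 2) (Fin 2) (ZMod p)) 1 1,
            (h : Matrix (Fin 2) (Fin 2) (ZMod p)) 0 0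
              - (h : Matrix (Fin 2) (Fin 2) (ZMod p)) 1 1;
            (h : Matrix (Fin 2) (Fin 2) (ZMod p)) 0 0
              - (h : Matrix (Fin 2) (Fin 2) (ZMod p)) 1 1,
            (h : Matrix (Fin 2) (Fin 2) (ZMod p)) 0 0
              + (h : Matrix (Fin 2) (Fin 2) (ZMod p)) 1 1] := by
      rw [Units.val_mul, Units.val_mul, sg_inv_val h2, sg_val h2]
      ext i j
      fin_cases i <;> fin_cases j <;>
        simp [Matrix.mul_apply, Matrix.vecMul, dotProduct, Matrix.vecHead, Matrix.vecTail, Fin.sum_univ_two, hh1, hh2] <;> ring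
    constructor
    · show ((sg p h2 * h * (sg p h2)⁻¹ : GL2 p) : Matrix (Fin 2) (Fin 2) (ZMod p)) 0 0
        = ((sg p h2 * h * (sg p h2)⁻¹ : GL2 p) : Matrix (Fin 2) (Fin 2) (ZMod p)) 1 1
      rw [key]; simp
    · show ((sg p h2 * h * (sg p h2)⁻¹ : GL2 p) : Matrix (Fin 2) (Fin 2) (ZMod p)) 0 1
        = 1 * ((sg p h2 * h * (sg p h2)⁻¹ : GL2 p) : Matrix (Fin 2) (Fin 2) (ZMod p)) 1 0
      rw [key]; simp

lemma Nspl'_eq : Nspl' p = (Nspl p).map (MulAut.conj (sg p h2)).toMonoidHom := by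
  unfold Nspl' Nspl
  rw [Cgen_one_eq h2, ← Subgroup.map_equiv_normalizer_eq]

lemma mem_Nspl'_iff {g : GL2 p} :
    g ∈ Nspl' p ↔ ∃ n ∈ Nspl p, sg p h2 * n * (sg p h2)⁻¹ = g := by
  rw [Nspl'_eq h2, Subgroup.mem_map]
  rfl

lemma conj_mem_Nspl' {n : GL2 p} (hn : n ∈ Nspl p) :
    sg p h2 * n * (sg p h2)⁻¹ ∈ Nspl' p := (mem_Nspl'_iff h2).2 ⟨n, hn, rfl⟩

lemma conj_mem_Nspl {n : GL2 p} (hn : n ∈ Nspl' p) :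
    (sg p h2)⁻¹ * n * sg p h2 ∈ Nspl p := by
  obtain ⟨m, hm, rfl⟩ := (mem_Nspl'_iff h2).1 hn
  have : (sg p h2)⁻¹ * (sg p h2 * m * (sg p h2)⁻¹) * sg p h2 = m := by group
  rw [this]
  exact hm

end Aux2


section Aux3
open Chen

variable {p : ℕ} [Fact p.Prime] (h2 : (2 : ZMod p) ≠ 0)

lemma mem_dosetN_iff {g : GL2 p} :
    g ∈ dosetN p (-1) ↔ ∃ a ∈ Nspl p, ∃ b ∈ Nspl p, g = a * sg p h2 * b := by
  simp only [dosetN, Set.mem_setOf_eq]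
  constructor
  · rintro ⟨a, ha, b, hb, hab⟩
    have : a⁻¹ * g * b⁻¹ = sg p h2 := Units.ext (hab.trans (sg_val h2).symm)
    exact ⟨a, ha, b, hb, by rw [← this]; group⟩
  · rintro ⟨a, ha, b, hb, rfl⟩
    refine ⟨a, ha, b, hb, ?_⟩
    have : a⁻¹ * (a * sg p h2 * b) * b⁻¹ = sg p h2 := by group
    rw [this, sg_val h2]

lemma memmul_right_iff {G : Type} [Group G] {A B : Subgroup G} {g b : G} (hb : b ∈ B) :
    g * b ∈ (A : Set G) * (B : Set G) ↔ g ∈ (A : Set G) * (B : Set G) := by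
  simp only [Set.mem_mul]
  constructor
  · rintro ⟨x, hx, y, hy, h⟩
    exact ⟨x, hx, y * b⁻¹, B.mul_mem hy (B.inv_mem hb), by rw [← mul_assoc, h, mul_inv_cancel_right]⟩
  · rintro ⟨x, hx, y, hy, h⟩
    exact ⟨x, hx, y * b, B.mul_mem hy hb, by rw [← mul_assoc, h]⟩

lemma memmul_left_iff {G : Type} [Group G] {A B : Subgroup G} {g a : G} (ha : a ∈ A) :
    a * g ∈ (A : Set G) * (B : Set G) ↔ g ∈ (A : Set G) * (B : Set G) := by
  simp only [Set.mem_mul]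
  constructor
  · rintro ⟨x, hx, y, hy, h⟩
    refine ⟨a⁻¹ * x, A.mul_mem (A.inv_mem ha) hx, y, hy, ?_⟩
    rw [mul_assoc, h, inv_mul_cancel_left]
  · rintro ⟨x, hx, y, hy, h⟩
    exact ⟨a * x, A.mul_mem ha hx, y, hy, by rw [mul_assoc, h]⟩

lemma E1 {x : GL2 p} :
    x ∈ dosetN p (-1) ↔
      x * (sg p h2)⁻¹ ∈ (Nspl p : Set (GL2 p)) * (Nspl' p : Set (GL2 p)) := by
  rw [mem_dosetN_iff h2, Set.mem_mul]
  simp only [SetLike.mem_coe]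
  constructor
  · rintro ⟨a, ha, b, hb, rfl⟩
    exact ⟨a, ha, sg p h2 * b * (sg p h2)⁻¹, conj_mem_Nspl' h2 hb, by group⟩
  · rintro ⟨a, ha, c, hc, hee⟩
    obtain ⟨n, hn, rfl⟩ := (mem_Nspl'_iff h2).1 hc
    refine ⟨a, ha, n, hn, ?_⟩
    have hx : x = a * (sg p h2 * n * (sg p h2)⁻¹) * sg p h2 := by
      rw [hee]; group
    rw [hx]; group

lemma E2 {x : GL2 p} :
    x ∈ dosetN p (-1) ↔
      sg p h2 * x ∈ (Nspl' p : Set (GL2 p)) * (Nspl p : Set (GL2 p)) := by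
  rw [mem_dosetN_iff h2, Set.mem_mul]
  simp only [SetLike.mem_coe]
  constructor
  · rintro ⟨a, ha, b, hb, rfl⟩
    exact ⟨sg p h2 * a * (sg p h2)⁻¹, conj_mem_Nspl' h2 ha,
      (sg p h2 * sg p h2) * b, (Nspl p).mul_mem (sg_sq_mem_N h2) hb, by group⟩
  · rintro ⟨c, hc, b, hb, hee⟩
    obtain ⟨n, hn, rfl⟩ := (mem_Nspl'_iff h2).1 hc
    refine ⟨n * (sg p h2 * sg p h2)⁻¹,
      (Nspl p).mul_mem hn ((Nspl p).inv_mem (sg_sq_mem_N h2)), b, hb, ?_⟩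
    have hx : x = (sg p h2)⁻¹ * (sg p h2 * n * (sg p h2)⁻¹ * b) := by
      rw [hee]; group
    rw [hx]; group

lemma mem_image_smul_iff {G : Type} [Group G] {K : Subgroup G} {S : Set G}
    (hS : ∀ s ∈ S, ∀ k ∈ K, s * k ∈ S) (g : G) (c : G ⧸ K) :
    c ∈ QuotientGroup.mk '' (g • S) ↔ g⁻¹ * c.out ∈ S := by
  constructor
  · rintro ⟨x, hx, hmk⟩
    obtain ⟨s, hs, rfl⟩ := hx
    have hk : (g * s)⁻¹ * c.out ∈ K :=
      QuotientGroup.eq.mp (hmk.trans (QuotientGroup.out_eq' c).symm)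
    have := hS s hs _ hk
    simpa [_root_.mul_inv_rev, mul_assoc] using this
  · intro h
    refine ⟨g * (g⁻¹ * c.out), ⟨g⁻¹ * c.out, h, rfl⟩, ?_⟩
    rw [mul_inv_cancel_left]
    exact QuotientGroup.out_eq' c

end Aux3


section Aux4
open Chen

variable {p : ℕ} [Fact p.Prime]

lemma T_comp_apply (R : Type) [CommRing R] {G : Type} [Group G] [Fintype G]
    (H K L : Subgroup G) (S₁ S₂ : Set G)
    (hS₁ : ∀ s ∈ S₁, ∀ k ∈ L, s * k ∈ S₁) (hS₂ : ∀ s ∈ S₂, ∀ k ∈ K, s * k ∈ S₂)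
    (v : (G ⧸ H) → R) (c : G ⧸ L) :
    ((T R K L S₁).comp (T R H K S₂)) v c
      = ∑ d : G ⧸ H, v d * ∑ e : G ⧸ K,
          (if d.out⁻¹ * e.out ∈ S₂ then 1 else 0)
            * (if e.out⁻¹ * c.out ∈ S₁ then 1 else 0) := by
  simp only [LinearMap.comp_apply, T, LinearMap.coe_mk, AddHom.coe_mk]
  simp only [mem_image_smul_iff hS₁, mem_image_smul_iff hS₂]
  simp_rw [Finset.sum_mul, Finset.mul_sum]
  rw [Finset.sum_comm]
  exact Finset.sum_congr rfl fun d _ => Finset.sum_congr rfl fun e _ => mul_assoc _ _ _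

lemma ite_inst_irrel {P : Prop} (i1 i2 : Decidable P) (a b : ℤ) :
    @ite _ P i1 a b = @ite _ P i2 a b := by rw [Subsingleton.elim i1 i2]

lemma count_eq (h2 : (2 : ZMod p) ≠ 0) (x y : GL2 p) :
    ∑ e : GL2 p ⧸ Nspl p,
        (if x⁻¹ * e.out ∈ dosetN p (-1) then (1:ℤ) else 0)
          * (if e.out⁻¹ * y ∈ dosetN p (-1) then 1 else 0)
      = ∑ f : GL2 p ⧸ Nspl' p,
        (if x⁻¹ * f.out ∈ (Nspl p : Set (GL2 p)) * (Nspl' p : Set (GL2 p)) then (1:ℤ) else 0)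
          * (if f.out⁻¹ * y ∈ (Nspl' p : Set (GL2 p)) * (Nspl p : Set (GL2 p)) then 1 else 0) := by
  refine Finset.sum_nbij' (fun e => QuotientGroup.mk (e.out * (sg p h2)⁻¹))
    (fun f => QuotientGroup.mk (f.out * sg p h2)) (fun _ _ => Finset.mem_univ _)
    (fun _ _ => Finset.mem_univ _) ?_ ?_ ?_
  · intro e _
    obtain ⟨n, hn⟩ := QuotientGroup.mk_out_eq_mul (Nspl' p) (e.out * (sg p h2)⁻¹)
    rw [hn, show e.out * (sg p h2)⁻¹ * ↑n * sg p h2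
        = e.out * ((sg p h2)⁻¹ * ↑n * sg p h2) from by group,
      QuotientGroup.mk_mul_of_mem _ (conj_mem_Nspl h2 n.2), QuotientGroup.out_eq']
  · intro f _
    obtain ⟨n, hn⟩ := QuotientGroup.mk_out_eq_mul (Nspl p) (f.out * sg p h2)
    rw [hn, show f.out * sg p h2 * ↑n * (sg p h2)⁻¹
        = f.out * (sg p h2 * ↑n * (sg p h2)⁻¹) from by group,
      QuotientGroup.mk_mul_of_mem _ (conj_mem_Nspl' h2 n.2), QuotientGroup.out_eq']
  · intro e _
    obtain ⟨n, hn⟩ := QuotientGroup.mk_out_eq_mul (Nspl' p) (e.out * (sg p h2)⁻¹)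
    rw [hn]
    have hc1 : (x⁻¹ * (e.out * (sg p h2)⁻¹ * ↑n)
          ∈ (Nspl p : Set (GL2 p)) * (Nspl' p : Set (GL2 p)))
        ↔ x⁻¹ * e.out ∈ dosetN p (-1) := by
      rw [show x⁻¹ * (e.out * (sg p h2)⁻¹ * ↑n)
          = x⁻¹ * e.out * (sg p h2)⁻¹ * ↑n from by group]
      rw [memmul_right_iff n.2]
      exact (E1 h2).symm
    have hc2 : ((e.out * (sg p h2)⁻¹ * ↑n)⁻¹ * y
          ∈ (Nspl' p : Set (GL2 p)) * (Nspl p : Set (GL2 p)))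
        ↔ e.out⁻¹ * y ∈ dosetN p (-1) := by
      rw [show (e.out * (sg p h2)⁻¹ * ↑n)⁻¹ * y
          = (↑n)⁻¹ * (sg p h2 * (e.out⁻¹ * y)) from by group]
      rw [memmul_left_iff ((Nspl' p).inv_mem n.2)]
      exact (E2 h2).symm
    simp only [hc1, hc2]

end Aux4

set_option maxHeartbeats 1000000 in
open Chen in
/-- **Proposition 8.7.** In `ℤ[N\\G/N]`, the square of the operator `Nσ₋₁N`
(`σ₋₁ = [[1,1],[1,−1]]`) equals the composite operator `NN'' × N''N` through `ℤ[G/N'']`. -/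
theorem sigma_neg_one_sq (p : ℕ) [Fact p.Prime] (hodd : Odd p) :
    (T ℤ (Nspl p) (Nspl p) (dosetN p (-1))).comp (T ℤ (Nspl p) (Nspl p) (dosetN p (-1))) =
    (T ℤ (Nspl' p) (Nspl p) (((Nspl' p : Set (GL2 p)) * (Nspl p : Set (GL2 p))))).comp (T ℤ (Nspl p) (Nspl' p) (((Nspl p : Set (GL2 p)) * (Nspl' p : Set (GL2 p))))) := by
  have h2 : (2 : ZMod p) ≠ 0 := two_nz hodd
  have hS : ∀ s ∈ dosetN p (-1), ∀ k ∈ Nspl p, s * k ∈ dosetN p (-1) := by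
    intro s hs k hk
    rw [mem_dosetN_iff h2] at hs ⊢
    obtain ⟨a, ha, b, hb, rfl⟩ := hs
    exact ⟨a, ha, b * k, (Nspl p).mul_mem hb hk, by group⟩
  have hNN'' : ∀ s ∈ (Nspl p : Set (GL2 p)) * (Nspl' p : Set (GL2 p)),
      ∀ k ∈ Nspl' p, s * k ∈ (Nspl p : Set (GL2 p)) * (Nspl' p : Set (GL2 p)) :=
    fun s hs k hk => (memmul_right_iff hk).2 hs
  have hN''N : ∀ s ∈ (Nspl' p : Set (GL2 p)) * (Nspl p : Set (GL2 p)),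
      ∀ k ∈ Nspl p, s * k ∈ (Nspl' p : Set (GL2 p)) * (Nspl p : Set (GL2 p)) :=
    fun s hs k hk => (memmul_right_iff hk).2 hs
  refine LinearMap.ext fun v => ?_
  funext c
  rw [T_comp_apply ℤ (Nspl p) (Nspl p) (Nspl p) _ _ hS hS v c,
    T_comp_apply ℤ (Nspl p) (Nspl' p) (Nspl p) _ _ hN''N hNN'' v c]
  refine Finset.sum_congr rfl fun d _ => ?_
  rw [count_eq h2 d.out c.out]
  exact congrArg _ (Finset.sum_congr rfl fun f _ =>
    congrArg₂ (· * ·) (ite_inst_irrel _ _ _ _) (ite_inst_irrel _ _ _ _))
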